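/- (Quadratic convexity theorem) Let n + 1 ≥ 3 and let q : ℝ^{n+1} → ℝ² be the map x ↦ (q₀(x), q₁(x)), where q₀, q₁ are real homogeneous quadratic forms. Then the image q(S^n) of the unit sphere S^n = {x ∈ ℝ^{n+1} : ‖x‖ = 1} is a convex subset of the plane ℝ². -/

import Mathlib

open CategoryTheory

noncomputable section

/-- The singular chain complex functor with `ℤ/2` coefficients: compose the singular
simplicial set functor with the free `ℤ/2`-module functor and the alternating face map
complex. -/
def singularChainFunctor : TopCat ⥤ ChainComplex (ModuleCat (ZMod 2)) ℕ :=
  TopCat.toSSet ⋙ ((SimplicialObject.whiskering _ _).obj (ModuleCat.free (ZMod 2))) ⋙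
    AlgebraicTopology.alternatingFaceMapComplex _

/-- Singular homology of a topological space with `ℤ/2` coefficients. -/
def homologyZ2 (X : Type) [TopologicalSpace X] (k : ℕ) : ModuleCat (ZMod 2) :=
  (singularChainFunctor.obj (TopCat.of X)).homology k

/-- `ℤ/2` Betti numbers: `b_k(X) = dim_{ℤ/2} H_k(X; ℤ/2)`. -/
def bettiZ2 (X : Type) [TopologicalSpace X] (k : ℕ) : ℕ :=
  Module.finrank (ZMod 2) (homologyZ2 X k)

/-- Reduced `ℤ/2` Betti numbers: `b̃_k = b_k` for `k ≥ 1` and `b̃_0 = b_0 - 1`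
(for nonempty spaces). -/
def reducedBettiZ2 (X : Type) [TopologicalSpace X] (k : ℕ) : ℕ :=
  if k = 0 then bettiZ2 X 0 - 1 else bettiZ2 X k

/-- The singular cochain complex functor with `ℤ/2` coefficients, obtained by dualizing
the singular chain complex. -/
def singularCochainFunctor : TopCatᵒᵖ ⥤ CochainComplex (ModuleCat (ZMod 2)) ℕ :=
  singularChainFunctor.op ⋙ HomologicalComplex.opFunctor _ _ ⋙
    ((linearYoneda (ZMod 2) (ModuleCat (ZMod 2))).obj
      (ModuleCat.of (ZMod 2) (ZMod 2))).mapHomologicalComplex _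

/-- Singular cohomology of a topological space with `ℤ/2` coefficients. -/
def cohomologyZ2 (X : Type) [TopologicalSpace X] (k : ℕ) : ModuleCat (ZMod 2) :=
  (singularCochainFunctor.obj (Opposite.op (TopCat.of X))).homology k

/-- The map induced on `ℤ/2` singular cohomology by a continuous map. -/
def cohomologyMap {X Y : Type} [TopologicalSpace X] [TopologicalSpace Y]
    (f : C(X, Y)) (k : ℕ) : cohomologyZ2 Y k ⟶ cohomologyZ2 X k :=
  HomologicalComplex.homologyMap
    (singularCochainFunctor.map (show TopCat.of X ⟶ TopCat.of Y from TopCat.ofHom f).op) k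

/-- Relative singular homology with `ℤ/2` coefficients of a pair of subsets `T ⊆ S`:
the homology of the quotient (cokernel) of the singular chain complexes. -/
def relHomologyZ2 {W : Type} [TopologicalSpace W] (S T : Set W) (h : T ⊆ S) (k : ℕ) :
    ModuleCat (ZMod 2) :=
  (Limits.cokernel (singularChainFunctor.map
    (TopCat.ofHom ⟨Set.inclusion h, continuous_inclusion h⟩ : TopCat.of T ⟶ TopCat.of S))).homology k

/-- Relative `ℤ/2` Betti numbers of a pair `T ⊆ S`. -/
def relBettiZ2 {W : Type} [TopologicalSpace W] (S T : Set W) (h : T ⊆ S) (k : ℕ) : ℕ :=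
  Module.finrank (ZMod 2) (relHomologyZ2 S T h k)

/-- The quotient topology on the real projective space of a topological vector space. -/
instance projSpaceTop (V : Type*) [AddCommGroup V] [Module ℝ V] [TopologicalSpace V] :
    TopologicalSpace (Projectivization ℝ V) :=
  inferInstanceAs (TopologicalSpace (Quotient (projectivizationSetoid ℝ V)))

/-- The positive inertia index `i⁺` of a real quadratic form: the maximal dimension of a
subspace on which the form is positive definite. -/
def posInertia {V : Type*} [AddCommGroup V] [Module ℝ V] (g : QuadraticForm ℝ V) : ℕ :=
  sSup {d | ∃ W : Submodule ℝ V, Module.finrank ℝ ↥W = d ∧ ∀ x ∈ W, x ≠ 0 → 0 < g x}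

/-- The negative inertia index `i⁻` of a real quadratic form: `i⁻(g) = i⁺(-g)`. -/
def negInertia {V : Type*} [AddCommGroup V] [Module ℝ V] (g : QuadraticForm ℝ V) : ℕ :=
  posInertia (-g)

/-- The kernel (radical) of a real quadratic form: the kernel of the associated
symmetric bilinear form. -/
def qfKer {V : Type*} [AddCommGroup V] [Module ℝ V] (g : QuadraticForm ℝ V) :
    Submodule ℝ V :=
  LinearMap.ker (QuadraticMap.associated (R := ℝ) g)

/-- The intersection of the two quadrics `{q₀ = 0}` and `{q₁ = 0}` in the real projective
space `ℝP^n`. -/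
def projQuadricSet {n : ℕ} (q₀ q₁ : QuadraticForm ℝ (EuclideanSpace ℝ (Fin (n + 1)))) :
    Set (Projectivization ℝ (EuclideanSpace ℝ (Fin (n + 1)))) :=
  {p | ∃ x : EuclideanSpace ℝ (Fin (n + 1)), ∃ hx : x ≠ 0,
    p = Projectivization.mk ℝ x hx ∧ q₀ x = 0 ∧ q₁ x = 0}

/-- Nonsingularity of the intersection of two quadrics: at every nonzero common zero the
differentials of the two forms are linearly independent, i.e. `0` is a regular value of
`x ↦ (q₀ x, q₁ x)` on `ℝ^{n+1} ∖ {0}`. -/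
def NonsingularPair {n : ℕ} (q₀ q₁ : QuadraticForm ℝ (EuclideanSpace ℝ (Fin (n + 1)))) :
    Prop :=
  ∀ x : EuclideanSpace ℝ (Fin (n + 1)), x ≠ 0 → q₀ x = 0 → q₁ x = 0 →
    LinearIndependent ℝ ![fderiv ℝ (fun y => q₀ y) x, fderiv ℝ (fun y => q₁ y) x]


/-!
Let `a = q x` and `b = q y` with `x, y ∈ S^n`, and let `ℓ = c` be an equation of a line through
`a` and `b`. The quadratic form `Q = ℓ ∘ q - c ‖·‖²` vanishes at `x` and `y`, and for a unit
vector `w`, `q w` lies on the line iff `Q w = 0`. When `n + 1 ≥ 3` there is a `z ≠ 0` that is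
`Q`-orthogonal to `x` and `y`, and inside `span {x, y, z}` one writes down an explicit path of
nonzero `Q`-isotropic vectors from `x` to a multiple of `y`. Normalising it gives a path in
`S^n ∩ {Q = 0}` from `x` to `±y`; its image under `q` is a connected subset of the line that
contains `a` and `b`, hence contains the segment `[a, b]`.
-/

open Set Module QuadraticMap

namespace QuadraticMap

theorem continuous_of_finiteDimensional {E : Type*} [NormedAddCommGroup E] [NormedSpace ℝ E]
    [FiniteDimensional ℝ E] (Q : QuadraticForm ℝ E) : Continuous Q := by
  let B : E →L[ℝ] E →L[ℝ] ℝ := (associated Q).toContinuousBilinearMap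
  have hB : Continuous fun z => B z z := B.continuous.clm_apply continuous_id
  exact hB.congr fun z => associated_eq_self_apply ℝ Q z

section Isotropic

variable {V : Type*} [AddCommGroup V] [Module ℝ V] (Q : QuadraticForm ℝ V)

theorem apply_smul_add_smul (x y : V) (a b : ℝ) :
    Q (a • x + b • y) = a ^ 2 * Q x + b ^ 2 * Q y + a * b * polar Q x y := by
  rw [QuadraticMap.map_add (⇑Q), QuadraticMap.map_smul, QuadraticMap.map_smul, polar_smul_left,
    polar_smul_right]
  simp only [smul_eq_mul]
  ring

theorem linearIndependent_pair_of_polar {x y z : V} (hz : z ≠ 0) (hyx : polar Q y x ≠ 0)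
    (hyz : polar Q y z = 0) : LinearIndependent ℝ ![x, z] := by
  refine LinearIndependent.pair_iff.2 fun s t hst => ?_
  obtain rfl : s = 0 := by
    have := congrArg (polar Q y) hst
    rw [polar_add_right, polar_smul_right, polar_smul_right, hyz, polar_zero_right,
      smul_zero, add_zero, smul_eq_mul] at this
    exact (mul_eq_zero.1 this).resolve_right hyx
  rw [zero_smul, zero_add, smul_eq_zero] at hst
  exact ⟨rfl, hst.resolve_right hz⟩

theorem exists_ne_zero_polar_eq_zero [FiniteDimensional ℝ V] (hV : 3 ≤ finrank ℝ V) (x y : V) :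
    ∃ z ≠ 0, polar Q x z = 0 ∧ polar Q y z = 0 := by
  have hker : LinearMap.ker ((polarBilin Q x).prod (polarBilin Q y)) ≠ ⊥ :=
    LinearMap.ker_ne_bot_of_finrank_lt (by rw [finrank_prod, finrank_self]; omega)
  obtain ⟨z, hz, hz0⟩ := Submodule.exists_mem_ne_zero_of_ne_bot hker
  simp only [LinearMap.mem_ker, LinearMap.prod_apply, Function.prod, Prod.mk_eq_zero,
    polarBilin_apply_apply] at hz
  exact ⟨z, hz0, hz⟩

variable [TopologicalSpace V] [IsTopologicalAddGroup V] [ContinuousSMul ℝ V]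

theorem joinedIn_of_polar_eq_zero {x y : V} (hxy : LinearIndependent ℝ ![x, y]) (hx : Q x = 0)
    (hy : Q y = 0) (hp : polar Q x y = 0) : JoinedIn {w | w ≠ 0 ∧ Q w = 0} x y := by
  refine JoinedIn.of_segment_subset ?_
  rintro _ ⟨a, b, -, -, hab, rfl⟩
  refine ⟨fun h0 => ?_, by rw [apply_smul_add_smul, hx, hy, hp]; ring⟩
  obtain ⟨rfl, rfl⟩ := LinearIndependent.pair_iff.1 hxy a b h0
  norm_num at hab

theorem joinedIn_smul_of_polar_ne_zero {x y z : V} (hx : Q x = 0) (hy : Q y = 0) (hy0 : y ≠ 0)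
    (hxz : polar Q x z = 0) (hyz : polar Q y z = 0) (hxy : polar Q x y ≠ 0) (hz : Q z ≠ 0) :
    JoinedIn {w | w ≠ 0 ∧ Q w = 0} x ((-Q z / polar Q x y) • y) := by
  set κ := -Q z / polar Q x y
  have hκ : κ * polar Q x y = -Q z := div_mul_cancel₀ _ hxy
  have hκ0 : κ ≠ 0 := div_ne_zero (neg_ne_zero.2 hz) hxy
  -- In the coordinates `a x + b y + c z` the form reads `polar Q x y * a * b + Q z * c ^ 2`,
  -- which vanishes at `(u ^ 2, κ v ^ 2, u v)`; take `(u, v) = (1 - t, t)`.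
  let f : ℝ → V := fun t => ((1 - t) ^ 2) • x + (κ * t ^ 2) • y + (t * (1 - t)) • z
  refine JoinedIn.ofLine (f := f) (by fun_prop) (by simp [f]) (by simp [f]) ?_
  rintro _ ⟨t, -, rfl⟩
  constructor
  · intro h0
    have hpolar := congrArg (polar Q y) h0
    simp only [f, polar_add_right, polar_smul_right, polar_self, hy, hyz, polar_zero_right,
      smul_zero, smul_eq_mul, mul_zero, add_zero, polar_comm Q y x] at hpolar
    obtain rfl : t = 1 := by
      have := pow_eq_zero_iff two_ne_zero |>.1 <| (mul_eq_zero.1 hpolar).resolve_right hxy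
      linarith
    simp [f, hy0, hκ0] at h0
  · simp only [f]
    rw [QuadraticMap.map_add (⇑Q), apply_smul_add_smul, QuadraticMap.map_smul, polar_smul_right,
      polar_add_left, polar_smul_left, polar_smul_left, hxz, hyz, hx, hy]
    simp only [smul_eq_mul]
    linear_combination (t ^ 2 * (1 - t) ^ 2) * hκ

theorem exists_joinedIn_smul [FiniteDimensional ℝ V] (hV : 3 ≤ finrank ℝ V) {x y : V}
    (hx0 : x ≠ 0) (hy0 : y ≠ 0) (hx : Q x = 0) (hy : Q y = 0) :
    ∃ γ : ℝ, γ ≠ 0 ∧ JoinedIn {w | w ≠ 0 ∧ Q w = 0} x (γ • y) := by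
  by_cases hind : LinearIndependent ℝ ![x, y]
  swap
  · obtain ⟨a, rfl⟩ : ∃ a : ℝ, a • x = y := by
      simpa [LinearIndependent.pair_iff' hx0] using hind
    have ha : a ≠ 0 := by rintro rfl; simp at hy0
    refine ⟨a⁻¹, inv_ne_zero ha, ?_⟩
    rw [smul_smul, inv_mul_cancel₀ ha, one_smul]
    exact JoinedIn.refl ⟨hx0, hx⟩
  by_cases hxy : polar Q x y = 0
  · exact ⟨1, one_ne_zero, by simpa using joinedIn_of_polar_eq_zero Q hind hx hy hxy⟩
  obtain ⟨z, hz0, hxz, hyz⟩ := exists_ne_zero_polar_eq_zero Q hV x y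
  by_cases hz : Q z = 0
  · have hyx : polar Q y x ≠ 0 := by rwa [polar_comm]
    have hxz_ind := linearIndependent_pair_of_polar Q hz0 hyx hyz
    have hzy_ind :=
      LinearIndependent.pair_symm_iff.1 (linearIndependent_pair_of_polar Q hz0 hxy hxz)
    refine ⟨1, one_ne_zero, ?_⟩
    rw [one_smul]
    exact (joinedIn_of_polar_eq_zero Q hxz_ind hx hz hxz).trans
      (joinedIn_of_polar_eq_zero Q hzy_ind hz hy (by rwa [polar_comm]))
  · exact ⟨_, div_ne_zero (neg_ne_zero.2 hz) hxy,
      joinedIn_smul_of_polar_ne_zero Q hx hy hy0 hxz hyz hxy hz⟩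

end Isotropic

theorem exists_joinedIn_sphere {V : Type*} [NormedAddCommGroup V] [NormedSpace ℝ V]
    [FiniteDimensional ℝ V] (hV : 3 ≤ finrank ℝ V) (Q : QuadraticForm ℝ V) {x y : V}
    (hx : ‖x‖ = 1) (hy : ‖y‖ = 1) (hQx : Q x = 0) (hQy : Q y = 0) :
    ∃ y', (y' = y ∨ y' = -y) ∧ JoinedIn {w | ‖w‖ = 1 ∧ Q w = 0} x y' := by
  have hx0 : x ≠ 0 := norm_ne_zero_iff.1 (by rw [hx]; exact one_ne_zero)
  have hy0 : y ≠ 0 := norm_ne_zero_iff.1 (by rw [hy]; exact one_ne_zero)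
  obtain ⟨γ, hγ, hjoin⟩ := exists_joinedIn_smul Q hV hx0 hy0 hQx hQy
  have hnormalize : ContinuousOn (fun w : V => ‖w‖⁻¹ • w) {w | w ≠ 0 ∧ Q w = 0} :=
    (continuous_norm.continuousOn.inv₀ fun w hw => norm_ne_zero_iff.2 hw.1).smul continuousOn_id
  refine ⟨‖γ • y‖⁻¹ • γ • y, ?_, ?_⟩
  · rw [norm_smul, hy, mul_one, smul_smul, Real.norm_eq_abs]
    rcases hγ.lt_or_gt with hneg | hpos
    · right
      rw [abs_of_neg hneg, inv_neg, neg_mul, inv_mul_cancel₀ hγ, neg_one_smul]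
    · left
      rw [abs_of_pos hpos, inv_mul_cancel₀ hγ, one_smul]
  · have hjoin' := hjoin.map_continuousOn hnormalize
    rw [hx, inv_one, one_smul] at hjoin'
    refine hjoin'.mono ?_
    rintro _ ⟨w, ⟨hw0, hw⟩, rfl⟩
    refine ⟨?_, by rw [QuadraticMap.map_smul, hw, smul_zero]⟩
    rw [norm_smul, norm_inv, norm_norm, inv_mul_cancel₀ (norm_ne_zero_iff.2 hw0)]

end QuadraticMap

theorem segment_subset_of_isPreconnected {K : Set (ℝ × ℝ)} (hK : _root_.IsPreconnected K)
    {a b : ℝ × ℝ} (ha : a ∈ K) (hb : b ∈ K)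
    (hline : ∀ v ∈ K, (b.2 - a.2) * (v.1 - a.1) = (b.1 - a.1) * (v.2 - a.2)) :
    segment ℝ a b ⊆ K := by
  rcases eq_or_ne a b with rfl | hab
  · simpa using ha
  have hd : (b.1 - a.1) ^ 2 + (b.2 - a.2) ^ 2 ≠ 0 := by
    intro h0
    apply hab
    ext <;> nlinarith [sq_nonneg (b.1 - a.1), sq_nonneg (b.2 - a.2)]
  -- the coordinate along the line `ab`, which determines a point of that line
  let μ : ℝ × ℝ → ℝ := fun v => (b.1 - a.1) * v.1 + (b.2 - a.2) * v.2
  rintro _ ⟨s, t, hs, ht, hst, rfl⟩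
  obtain rfl : s = 1 - t := by linarith
  have hseg : μ ((1 - t) • a + t • b) ∈ uIcc (μ a) (μ b) := by
    rw [← segment_eq_uIcc]
    refine ⟨1 - t, t, hs, ht, hst, ?_⟩
    simp only [μ, smul_eq_mul, Prod.smul_fst, Prod.smul_snd, Prod.fst_add, Prod.snd_add]
    ring
  obtain ⟨v, hv, hvw⟩ := (hK.image μ (by fun_prop)).ordConnected.uIcc_subset
    (mem_image_of_mem μ ha) (mem_image_of_mem μ hb) hseg
  have hv_line := hline v hv
  simp only [μ, smul_eq_mul, Prod.smul_fst, Prod.smul_snd, Prod.fst_add, Prod.snd_add] at hvw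
  suffices v = (1 - t) • a + t • b from this ▸ hv
  ext <;> simp only [smul_eq_mul, Prod.smul_fst, Prod.smul_snd, Prod.fst_add, Prod.snd_add] <;>
    refine mul_left_cancel₀ hd ?_
  · linear_combination (b.1 - a.1) * hvw + (b.2 - a.2) * hv_line
  · linear_combination (b.2 - a.2) * hvw - (b.1 - a.1) * hv_line

/-- **Quadratic convexity theorem.** For `n + 1 ≥ 3` the image of the unit
sphere `S^n` under the quadratic map `x ↦ (q₀(x), q₁(x))` is a convex subset of the
plane. -/
theorem quadratic_convexity (n : ℕ) (hn : 3 ≤ n + 1)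
    (q₀ q₁ : QuadraticForm ℝ (EuclideanSpace ℝ (Fin (n + 1)))) :
    Convex ℝ ((fun x => (q₀ x, q₁ x)) ''
      {x : EuclideanSpace ℝ (Fin (n + 1)) | ‖x‖ = 1}) := by
  refine convex_iff_segment_subset.2 ?_
  rintro _ ⟨x, hx, rfl⟩ _ ⟨y, hy, rfl⟩
  set d₀ := q₀ y - q₀ x
  set d₁ := q₁ y - q₁ x
  let Q := d₁ • q₀ - d₀ • q₁ - (d₁ * q₀ x - d₀ * q₁ x) • LinearMap.BilinMap.toQuadraticMap (innerₗ _)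
  have hQ_sphere : ∀ w, ‖w‖ = 1 → Q w = d₁ * (q₀ w - q₀ x) - d₀ * (q₁ w - q₁ x) := by
    intro w hw
    simp only [Q, sub_apply, smul_apply, LinearMap.BilinMap.toQuadraticMap_apply,
      innerₗ_apply_apply, real_inner_self_eq_norm_sq, hw, smul_eq_mul]
    ring
  obtain ⟨y', hy', p, hp⟩ := exists_joinedIn_sphere (by simpa using hn) Q hx hy
    (by rw [hQ_sphere x hx]; ring) (by rw [hQ_sphere y hy]; ring)
  have hqy' : (q₀ y', q₁ y') = (q₀ y, q₁ y) := by rcases hy' with rfl | rfl <;> simp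
  let f : unitInterval → ℝ × ℝ := fun t => (q₀ (p t), q₁ (p t))
  have hf : Continuous f :=
    (q₀.continuous_of_finiteDimensional.comp p.continuous).prodMk
      (q₁.continuous_of_finiteDimensional.comp p.continuous)
  refine Subset.trans (b := range f) ?_ (range_subset_iff.2 fun t => ⟨p t, (hp t).1, rfl⟩)
  refine segment_subset_of_isPreconnected (isPreconnected_range hf) ⟨0, by simp [f]⟩
    ⟨1, by simp [f, hqy']⟩ ?_
  rintro _ ⟨t, rfl⟩
  have hline := hQ_sphere _ (hp t).1
  rw [(hp t).2] at hline
  simp only [f]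
  linarith

end
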